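/- If A ⊆ [0,1] is a set of real numbers satisfying the descending chain condition, then the derived set A' = {(n - 1 + a)/n : n ∈ ℕ, n ≥ 1, a ∈ A_∞ ∩ [0,1]} ∪ {1} also satisfies the descending chain condition. -/

import Mathlib

/-- A set of reals satisfies the descending chain condition if it contains
no infinite strictly decreasing sequence. -/
def DCC (A : Set ℝ) : Prop := ∀ f : ℕ → ℝ, (∀ n, f n ∈ A) → ¬ StrictAnti f

/-- `Ainf A` is `{0}` together with all finite sums of elements of `A`. -/
def Ainf (A : Set ℝ) : Set ℝ :=
  {0} ∪ {x | ∃ n : ℕ, 0 < n ∧ ∃ g : Fin n → ℝ, (∀ i, g i ∈ A) ∧ x = ∑ i, g i}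

/-!
The sums of elements of a well-ordered set of nonnegative reals again form a well-ordered set
(Higman). A point `(n - 1 + a) / n` of the derived set with `a ≥ 0` is at least `1 - 1 / n`, so
below any level `t < 1` only finitely many `n` contribute, and each contributes a monotone image of
a well-ordered set. A descending chain starts below `1` after its first term, hence lies below
such a level.
-/

open Set

lemma dcc_iff_isWF {A : Set ℝ} : DCC A ↔ A.IsWF := by
  rw [isWF_iff_no_descending_seq]
  exact ⟨fun h f hf hmem => h f hmem hf, fun h f hmem hf => h f hf hmem⟩

lemma Ainf_subset_addSubmonoidClosure (A : Set ℝ) : Ainf A ⊆ AddSubmonoid.closure A := by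
  rintro x (rfl | ⟨n, -, g, hg, rfl⟩)
  · exact zero_mem _
  · exact sum_mem fun i _ => AddSubmonoid.subset_closure (hg i)

lemma isPWO_Ainf {A : Set ℝ} (hA : A ⊆ Ici 0) (hwf : A.IsWF) : (Ainf A).IsPWO :=
  (hwf.isPWO.addSubmonoid_closure fun _ ha => hA ha).mono (Ainf_subset_addSubmonoidClosure A)

lemma Set.IsWF.of_inter_Iic {α : Type*} [LinearOrder α] {s : Set α} {b : α} (hs : s ⊆ Iic b)
    (h : ∀ t < b, (s ∩ Iic t).IsWF) : s.IsWF := by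
  rw [isWF_iff_no_descending_seq]
  intro f hf hmem
  have hlt : f 1 < b := (hf zero_lt_one).trans_le (hs (hmem 0))
  refine isWF_iff_no_descending_seq.mp (h _ hlt) (fun k => f (k + 1))
    (hf.comp_strictMono (strictMono_id.add_const 1)) fun k => ⟨hmem _, ?_⟩
  exact hf.antitone (Nat.le_add_left 1 k)

noncomputable def derivedMap (n : ℕ) (a : ℝ) : ℝ := ((n : ℝ) - 1 + a) / n

lemma monotone_derivedMap (n : ℕ) : Monotone (derivedMap n) := fun a b hab => by
  unfold derivedMap
  gcongr

lemma derivedMap_le_one {n : ℕ} (hn : 1 ≤ n) {a : ℝ} (ha : a ≤ 1) : derivedMap n a ≤ 1 := by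
  have : (0 : ℝ) < n := by exact_mod_cast hn
  rw [derivedMap, div_le_one this]
  linarith

lemma one_sub_inv_le_derivedMap {n : ℕ} (hn : 1 ≤ n) {a : ℝ} (ha : 0 ≤ a) :
    1 - (n : ℝ)⁻¹ ≤ derivedMap n a :=
  calc 1 - (n : ℝ)⁻¹ = derivedMap n 0 := by
        have : (n : ℝ) ≠ 0 := by positivity
        rw [derivedMap]
        field_simp
        ring
    _ ≤ derivedMap n a := monotone_derivedMap n ha

lemma isWF_derived {B : Set ℝ} (hB : B.IsPWO) (hB01 : B ⊆ Icc 0 1) :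
    ({x | ∃ n : ℕ, 1 ≤ n ∧ ∃ a ∈ B, x = derivedMap n a} ∪ {1}).IsWF := by
  refine IsWF.of_inter_Iic (b := 1) ?_ fun t ht => ?_
  · rintro x (⟨n, hn, a, ha, rfl⟩ | hx)
    exacts [derivedMap_le_one hn (hB01 ha).2, hx.le]
  obtain ⟨M, hM⟩ := exists_nat_gt (1 - t)⁻¹
  refine ((Finset.isWF_bUnion (Finset.range M)).mpr fun n _ =>
    (hB.image_of_monotone (monotone_derivedMap n)).isWF).mono ?_
  rintro x ⟨⟨n, hn, a, ha, rfl⟩ | rfl, hxt⟩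
  · have hpos : (0 : ℝ) < n := by exact_mod_cast hn
    have hgap : 1 - t ≤ (n : ℝ)⁻¹ := by
      linarith [one_sub_inv_le_derivedMap hn (hB01 ha).1, mem_Iic.mp hxt]
    have hnM : (n : ℝ) < M := ((le_inv_comm₀ (sub_pos.mpr ht) hpos).mp hgap).trans_lt hM
    exact mem_biUnion (Finset.mem_range.mpr (by exact_mod_cast hnM)) ⟨a, ha, rfl⟩
  · exact absurd (mem_Iic.mp hxt) ht.not_ge

theorem dcc_of_derived (A : Set ℝ) (hA : A ⊆ Set.Icc 0 1) (h : DCC A) :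
    DCC ({x | ∃ n : ℕ, 1 ≤ n ∧ ∃ a ∈ Ainf A ∩ Set.Icc 0 1,
            x = ((n : ℝ) - 1 + a) / n} ∪ {1}) := by
  have hB : (Ainf A ∩ Icc 0 1).IsPWO :=
    (isPWO_Ainf (fun _ ha => (hA ha).1) (dcc_iff_isWF.mp h)).mono inter_subset_left
  exact dcc_iff_isWF.mpr (isWF_derived hB inter_subset_right)
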